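/- arXiv:2202.00628 — 7 statements merged into one kernel-verified Lean document; each statement's English description precedes it below -/
import Mathlib

section
/- If the loss function ℓ(z;θ) is L_θ-Lipschitz in θ and L_z-Lipschitz in z, and the distribution map D(·) is ε-sensitive (i.e., W(D(θ), D(θ')) ≤ ε‖θ−θ'‖ in Wasserstein-1 distance), then the performative risk PR(θ) = E_{z∼D(θ)} ℓ(z;θ) is (L_θ + εL_z)-Lipschitz in θ. -/
open MeasureTheory

/-- If the loss is `Lθ`-Lipschitz in `θ` and `Lz`-Lipschitz in `z`, and the distribution
map is `ε`-sensitive (encoded via Kantorovich–Rubinstein duality: expectations of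
`L`-Lipschitz functions differ by at most `L · ε‖θ−θ'‖`), then the performative risk
`PR θ = E_{z ∼ D θ} ℓ(z; θ)` is `(Lθ + ε Lz)`-Lipschitz. -/
theorem performative_risk_lipschitz {d m : ℕ}
    (Θ : Set (EuclideanSpace ℝ (Fin d)))
    (D : EuclideanSpace ℝ (Fin d) → Measure (EuclideanSpace ℝ (Fin m)))
    (hD : ∀ θ, IsProbabilityMeasure (D θ))
    (ℓ : EuclideanSpace ℝ (Fin m) → EuclideanSpace ℝ (Fin d) → ℝ)
    (Lθ Lz ε : ℝ) (hLθ : 0 ≤ Lθ) (hLz : 0 ≤ Lz) (hε : 0 ≤ ε)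
    (hbdd : ∀ z θ, ℓ z θ ∈ Set.Icc (0 : ℝ) 1)
    (hmeas : ∀ θ, Measurable fun z => ℓ z θ)
    (hLipθ : ∀ z, ∀ θ ∈ Θ, ∀ θ' ∈ Θ, |ℓ z θ - ℓ z θ'| ≤ Lθ * ‖θ - θ'‖)
    (hLipz : ∀ θ, ∀ z z', |ℓ z θ - ℓ z' θ| ≤ Lz * ‖z - z'‖)
    (hsens : ∀ θ ∈ Θ, ∀ θ' ∈ Θ, ∀ (f : EuclideanSpace ℝ (Fin m) → ℝ) (L : ℝ), 0 ≤ L →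
      (∀ z z', |f z - f z'| ≤ L * ‖z - z'‖) →
      |(∫ z, f z ∂(D θ)) - ∫ z, f z ∂(D θ')| ≤ L * (ε * ‖θ - θ'‖)) :
    ∀ θ ∈ Θ, ∀ θ' ∈ Θ,
      |(∫ z, ℓ z θ ∂(D θ)) - ∫ z, ℓ z θ' ∂(D θ')| ≤ (Lθ + ε * Lz) * ‖θ - θ'‖ := by
  intro θ hθ θ' hθ'
  have hint : ∀ σ τ, Integrable (fun z => ℓ z σ) (D τ) := by
    intro σ τ
    have := hD τ
    refine (integrable_const (1 : ℝ)).mono' (hmeas σ).aestronglyMeasurable ?_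
    filter_upwards with z
    have h := hbdd z σ
    rw [Real.norm_eq_abs, abs_le]
    exact ⟨by linarith [h.1], h.2⟩
  have h1 : |(∫ z, ℓ z θ ∂(D θ)) - ∫ z, ℓ z θ' ∂(D θ)| ≤ Lθ * ‖θ - θ'‖ := by
    rw [← integral_sub (hint θ θ) (hint θ' θ)]
    calc |∫ z, (ℓ z θ - ℓ z θ') ∂(D θ)|
        ≤ ∫ z, |ℓ z θ - ℓ z θ'| ∂(D θ) := by
          simpa [Real.norm_eq_abs] using
            norm_integral_le_integral_norm (μ := D θ) (fun z => ℓ z θ - ℓ z θ')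
      _ ≤ ∫ _z, Lθ * ‖θ - θ'‖ ∂(D θ) := by
          refine integral_mono_of_nonneg ?_ (integrable_const _) ?_
          · filter_upwards with z using abs_nonneg _
          · filter_upwards with z using hLipθ z θ hθ θ' hθ'
      _ = Lθ * ‖θ - θ'‖ := by
          have := hD θ
          simp
  have h2 : |(∫ z, ℓ z θ' ∂(D θ)) - ∫ z, ℓ z θ' ∂(D θ')| ≤ Lz * (ε * ‖θ - θ'‖) :=
    hsens θ hθ θ' hθ' (fun z => ℓ z θ') Lz hLz (hLipz θ')
  calc |(∫ z, ℓ z θ ∂(D θ)) - ∫ z, ℓ z θ' ∂(D θ')|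
      ≤ |(∫ z, ℓ z θ ∂(D θ)) - ∫ z, ℓ z θ' ∂(D θ)| +
        |(∫ z, ℓ z θ' ∂(D θ)) - ∫ z, ℓ z θ' ∂(D θ')|
        := abs_sub_le _ _ _
    _ ≤ Lθ * ‖θ - θ'‖ + Lz * (ε * ‖θ - θ'‖) := add_le_add h1 h2
    _ = (Lθ + ε * Lz) * ‖θ - θ'‖ := by ring
end

section
/- Suppose DPR(θ,θ') is (εL_z)-Lipschitz in its first argument. For a finite set S ⊆ Θ of deployed models, define PR_LB(θ) := max_{θ'∈S} (DPR(θ',θ) − εL_z‖θ−θ'‖) and PR_min := min_{θ∈Θ} min_{θ'∈S} (DPR(θ',θ) + εL_z‖θ'−θ‖). Then for every θ ∈ Θ, the suboptimality Δ(θ) := PR(θ) − inf_{θ''∈Θ} PR(θ'') satisfies Δ(θ) ≥ PR_LB(θ) − PR_min. -/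
/-- If `DPR` is `(ε Lz)`-Lipschitz in its first argument, then for a finite set `S` of
deployed models, the suboptimality `Δ(θ) = PR(θ) − inf_Θ PR` is lower bounded by
`PR_LB(θ) − PR_min`, where `PR_LB(θ) = max_{θ'∈S}(DPR(θ',θ) − εLz‖θ−θ'‖)` and
`PR_min = min_{θ∈Θ} min_{θ'∈S}(DPR(θ',θ) + εLz‖θ'−θ‖)`. -/
theorem suboptimality_lower_bound {d : ℕ}
    (Θ : Set (EuclideanSpace ℝ (Fin d))) (hΘc : IsCompact Θ) (hΘne : Θ.Nonempty)
    (DPR : EuclideanSpace ℝ (Fin d) → EuclideanSpace ℝ (Fin d) → ℝ)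
    (hcont : Continuous fun p : EuclideanSpace ℝ (Fin d) × EuclideanSpace ℝ (Fin d) =>
      DPR p.1 p.2)
    (ε Lz : ℝ) (hε : 0 ≤ ε) (hLz : 0 ≤ Lz)
    (hLip : ∀ θ₁ θ₂ θ', |DPR θ₁ θ' - DPR θ₂ θ'| ≤ ε * Lz * ‖θ₁ - θ₂‖)
    (S : Finset (EuclideanSpace ℝ (Fin d))) (hSne : S.Nonempty) (hSΘ : ↑S ⊆ Θ) :
    ∀ θ ∈ Θ,
      (DPR θ θ - sInf ((fun θ'' => DPR θ'' θ'') '' Θ)) ≥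
        S.sup' hSne (fun θ' => DPR θ' θ - ε * Lz * ‖θ - θ'‖) -
          sInf {x : ℝ | ∃ θ₀ ∈ Θ,
            x = S.inf' hSne (fun θ' => DPR θ' θ₀ + ε * Lz * ‖θ' - θ₀‖)} := by
  intro θ hθ
  have hPRcont : Continuous fun θ'' : EuclideanSpace ℝ (Fin d) => DPR θ'' θ'' :=
    hcont.comp (continuous_id.prodMk continuous_id)
  have himgc : IsCompact ((fun θ'' => DPR θ'' θ'') '' Θ) := hΘc.image hPRcont
  have hbdd : BddBelow ((fun θ'' => DPR θ'' θ'') '' Θ) := himgc.bddBelow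
  -- Part 1: sup' ≤ DPR θ θ
  have h1 : S.sup' hSne (fun θ' => DPR θ' θ - ε * Lz * ‖θ - θ'‖) ≤ DPR θ θ := by
    apply Finset.sup'_le
    intro θ' _
    have h := hLip θ' θ θ
    rw [norm_sub_rev] at h
    have habs := abs_le.mp h
    linarith [habs.2]
  -- Part 2: sInf image ≤ sInf set
  have h2 : sInf ((fun θ'' => DPR θ'' θ'') '' Θ) ≤
      sInf {x : ℝ | ∃ θ₀ ∈ Θ,
        x = S.inf' hSne (fun θ' => DPR θ' θ₀ + ε * Lz * ‖θ' - θ₀‖)} := by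
    apply le_csInf
    · exact ⟨_, θ, hθ, rfl⟩
    · rintro x ⟨θ₀, hθ₀, rfl⟩
      have hle : DPR θ₀ θ₀ ≤ S.inf' hSne (fun θ' => DPR θ' θ₀ + ε * Lz * ‖θ' - θ₀‖) := by
        apply Finset.le_inf'
        intro θ' _
        have h := hLip θ₀ θ' θ₀
        rw [norm_sub_rev] at h
        have habs := abs_le.mp h
        linarith [habs.2]
      exact le_trans (csInf_le hbdd ⟨θ₀, hθ₀, rfl⟩) hle
  linarith
end

section
/- With PR_LB and PR_min defined from a finite set S of deployed models as PR_LB(θ) = max_{θ'∈S}(DPR(θ',θ) − εL_z‖θ−θ'‖) and PR_min = min_{θ∈Θ} min_{θ'∈S}(DPR(θ',θ) + εL_z‖θ'−θ‖), any performative optimum θ_PO (a minimizer of PR over Θ) satisfies PR_LB(θ_PO) ≤ PR_min; in particular a performative optimum is never discarded by the rule 'discard θ if PR_LB(θ) > PR_min'. -/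
/-- A performative optimum is never discarded: with `PR_LB` and `PR_min` defined from a
finite set `S` of deployed models, any minimizer `θ_PO` of `PR(θ) = DPR(θ,θ)` over `Θ`
satisfies `PR_LB(θ_PO) ≤ PR_min`. -/
theorem optimum_never_discarded {d : ℕ}
    (Θ : Set (EuclideanSpace ℝ (Fin d))) (hΘc : IsCompact Θ) (hΘne : Θ.Nonempty)
    (DPR : EuclideanSpace ℝ (Fin d) → EuclideanSpace ℝ (Fin d) → ℝ)
    (hcont : Continuous fun p : EuclideanSpace ℝ (Fin d) × EuclideanSpace ℝ (Fin d) =>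
      DPR p.1 p.2)
    (ε Lz : ℝ) (hε : 0 ≤ ε) (hLz : 0 ≤ Lz)
    (hLip : ∀ θ₁ θ₂ φ, |DPR θ₁ φ - DPR θ₂ φ| ≤ ε * Lz * ‖θ₁ - θ₂‖)
    (S : Finset (EuclideanSpace ℝ (Fin d))) (hSne : S.Nonempty) (hSΘ : ↑S ⊆ Θ)
    (θPO : EuclideanSpace ℝ (Fin d)) (hθPO : θPO ∈ Θ)
    (hopt : ∀ θ ∈ Θ, DPR θPO θPO ≤ DPR θ θ) :
    S.sup' hSne (fun θ' => DPR θ' θPO - ε * Lz * ‖θPO - θ'‖) ≤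
      sInf {x : ℝ | ∃ θ₀ ∈ Θ,
        x = S.inf' hSne (fun θ' => DPR θ' θ₀ + ε * Lz * ‖θ' - θ₀‖)} := by
  have key : S.sup' hSne (fun θ' => DPR θ' θPO - ε * Lz * ‖θPO - θ'‖) ≤ DPR θPO θPO := by
    apply Finset.sup'_le
    intro θ' hθ'
    have h := hLip θ' θPO θPO
    have h2 := abs_le.mp h
    rw [norm_sub_rev]
    linarith [h2.2]
  refine le_trans key (le_csInf ?_ ?_)
  · obtain ⟨θ₀, hθ₀⟩ := hΘne
    exact ⟨_, θ₀, hθ₀, rfl⟩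
  · rintro x ⟨θ₀, hθ₀, rfl⟩
    rw [Finset.le_inf'_iff]
    intro θ' hθ'
    have h := hLip θ' θ₀ θ₀
    have h2 := abs_le.mp h
    have hopt' := hopt θ₀ hθ₀
    linarith [h2.1]
end

section
/- Suppose |D̂PR(θ',θ) − DPR(θ',θ)| ≤ γ for all deployed θ' ∈ P and all θ ∈ Θ (a uniform finite-sample error bound), DPR is (εL_z)-Lipschitz in its first argument, and PR(θ) = DPR(θ,θ). Define the empirical quantities P̂R_LB(θ) := max_{θ'∈P}(D̂PR(θ',θ) − εL_z‖θ−θ'‖) and P̂R_min := min_{θ∈Θ} min_{θ'∈P}(D̂PR(θ',θ) + εL_z‖θ'−θ‖). Then any minimizer θ_PO of PR satisfies P̂R_LB(θ_PO) ≤ P̂R_min + 2γ. -/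
/-- With finite-sample estimates `D̂PR` uniformly `γ`-accurate over deployed models `P`,
any minimizer `θ_PO` of `PR(θ) = DPR(θ,θ)` satisfies `P̂R_LB(θ_PO) ≤ P̂R_min + 2γ`. -/
theorem optimum_never_discarded_empirical {d : ℕ}
    (Θ : Set (EuclideanSpace ℝ (Fin d))) (hΘc : IsCompact Θ) (hΘne : Θ.Nonempty)
    (DPR DPRhat : EuclideanSpace ℝ (Fin d) → EuclideanSpace ℝ (Fin d) → ℝ)
    (hcont : Continuous fun p : EuclideanSpace ℝ (Fin d) × EuclideanSpace ℝ (Fin d) =>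
      DPR p.1 p.2)
    (ε Lz γ : ℝ) (hε : 0 ≤ ε) (hLz : 0 ≤ Lz) (hγ : 0 ≤ γ)
    (hLip : ∀ θ₁ θ₂ φ, |DPR θ₁ φ - DPR θ₂ φ| ≤ ε * Lz * ‖θ₁ - θ₂‖)
    (P : Finset (EuclideanSpace ℝ (Fin d))) (hPne : P.Nonempty) (hPΘ : ↑P ⊆ Θ)
    (hest : ∀ θ' ∈ P, ∀ θ ∈ Θ, |DPRhat θ' θ - DPR θ' θ| ≤ γ)
    (θPO : EuclideanSpace ℝ (Fin d)) (hθPO : θPO ∈ Θ)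
    (hopt : ∀ θ ∈ Θ, DPR θPO θPO ≤ DPR θ θ) :
    P.sup' hPne (fun θ' => DPRhat θ' θPO - ε * Lz * ‖θPO - θ'‖) ≤
      sInf {x : ℝ | ∃ θ₀ ∈ Θ,
        x = P.inf' hPne (fun θ' => DPRhat θ' θ₀ + ε * Lz * ‖θ' - θ₀‖)} + 2 * γ := by
  have key : ∀ θ' ∈ P, ∀ θ ∈ Θ, DPR θPO θPO - γ ≤ DPRhat θ' θ + ε * Lz * ‖θ' - θ‖ := by
    intro θ' hθ' θ hθ
    have h1 := hest θ' hθ' θ hθ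
    have h2 := hLip θ' θ θ
    have h3 := hopt θ hθ
    have := abs_le.mp h1
    have := abs_le.mp h2
    linarith [this.1, this.2, (abs_le.mp h1).1]
  have hlb : DPR θPO θPO - γ ≤ sInf {x : ℝ | ∃ θ₀ ∈ Θ,
      x = P.inf' hPne (fun θ' => DPRhat θ' θ₀ + ε * Lz * ‖θ' - θ₀‖)} := by
    apply le_csInf
    · obtain ⟨θ₀, hθ₀⟩ := hΘne
      exact ⟨_, θ₀, hθ₀, rfl⟩
    · rintro x ⟨θ₀, hθ₀, rfl⟩
      rw [Finset.le_inf'_iff]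
      intro θ' hθ'
      exact key θ' hθ' θ₀ hθ₀
  have hub : P.sup' hPne (fun θ' => DPRhat θ' θPO - ε * Lz * ‖θPO - θ'‖) ≤ DPR θPO θPO + γ := by
    rw [Finset.sup'_le_iff]
    intro θ' hθ'
    have h1 := hest θ' hθ' θPO hθPO
    have h2 := hLip θ' θPO θPO
    rw [show θ' - θPO = -(θPO - θ') by abel, norm_neg] at h2
    have := abs_le.mp h1
    have := abs_le.mp h2
    linarith [this.1, this.2, (abs_le.mp h1).2]
  linarith
end

section
/- Under the uniform finite-sample error bound |D̂PR(θ',θ) − DPR(θ',θ)| ≤ γ for all θ' ∈ P and θ ∈ Θ, if (i) every θ ∈ Θ has some deployed θ' ∈ P with ‖θ−θ'‖ ≤ r, (ii) a minimizer θ_PO of PR is in Θ, (iii) εL_z · r = γ, and (iv) θ satisfies the non-elimination condition P̂R_LB(θ) ≤ P̂R_min + 2γ, then PR(θ) − PR(θ_PO) ≤ 8γ. -/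
/-- Suboptimality of non-eliminated models: if `P` is an `r`-cover of `Θ`, the estimates
`D̂PR` are uniformly `γ`-accurate, `εLz · r = γ`, and `θ` satisfies the non-elimination
condition `P̂R_LB(θ) ≤ P̂R_min + 2γ`, then `PR(θ) − PR(θ_PO) ≤ 8γ`. -/
theorem non_eliminated_suboptimality {d : ℕ}
    (Θ : Set (EuclideanSpace ℝ (Fin d))) (hΘc : IsCompact Θ) (hΘne : Θ.Nonempty)
    (DPR DPRhat : EuclideanSpace ℝ (Fin d) → EuclideanSpace ℝ (Fin d) → ℝ)
    (hcont : Continuous fun p : EuclideanSpace ℝ (Fin d) × EuclideanSpace ℝ (Fin d) =>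
      DPR p.1 p.2)
    (ε Lz γ r : ℝ) (hε : 0 ≤ ε) (hLz : 0 ≤ Lz) (hγ : 0 ≤ γ) (hr : 0 ≤ r)
    (hLip : ∀ θ₁ θ₂ φ, |DPR θ₁ φ - DPR θ₂ φ| ≤ ε * Lz * ‖θ₁ - θ₂‖)
    (P : Finset (EuclideanSpace ℝ (Fin d))) (hPne : P.Nonempty) (hPΘ : ↑P ⊆ Θ)
    (hcover : ∀ θ ∈ Θ, ∃ θ' ∈ P, ‖θ - θ'‖ ≤ r)
    (hest : ∀ θ' ∈ P, ∀ θ ∈ Θ, |DPRhat θ' θ - DPR θ' θ| ≤ γ)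
    (hrγ : ε * Lz * r = γ)
    (θPO : EuclideanSpace ℝ (Fin d)) (hθPO : θPO ∈ Θ)
    (hopt : ∀ θ' ∈ Θ, DPR θPO θPO ≤ DPR θ' θ')
    (θ : EuclideanSpace ℝ (Fin d)) (hθ : θ ∈ Θ)
    (hnotelim : P.sup' hPne (fun θ' => DPRhat θ' θ - ε * Lz * ‖θ - θ'‖) ≤
      sInf {x : ℝ | ∃ θ₀ ∈ Θ,
        x = P.inf' hPne (fun θ' => DPRhat θ' θ₀ + ε * Lz * ‖θ' - θ₀‖)} + 2 * γ) :
    DPR θ θ - DPR θPO θPO ≤ 8 * γ := by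
  have hεLz : 0 ≤ ε * Lz := mul_nonneg hε hLz
  obtain ⟨p, hpP, hpr⟩ := hcover θ hθ
  obtain ⟨q, hqP, hqr⟩ := hcover θPO hθPO
  -- minimum of DPR on Θ × Θ for bddBelow
  obtain ⟨⟨a, b⟩, hab, hmin⟩ :=
    (hΘc.prod hΘc).exists_isMinOn (hΘne.prod hΘne) hcont.continuousOn
  set S := {x : ℝ | ∃ θ₀ ∈ Θ,
      x = P.inf' hPne (fun θ' => DPRhat θ' θ₀ + ε * Lz * ‖θ' - θ₀‖)} with hS
  have hbdd : BddBelow S := by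
    refine ⟨DPR a b - γ, ?_⟩
    rintro x ⟨θ₀, hθ₀, rfl⟩
    apply Finset.le_inf'
    intro θ' hθ'
    have h1 : |DPRhat θ' θ₀ - DPR θ' θ₀| ≤ γ := hest θ' hθ' θ₀ hθ₀
    have h2 : DPR a b ≤ DPR θ' θ₀ := hmin (Set.mk_mem_prod (hPΘ hθ') hθ₀)
    have := abs_le.1 h1
    nlinarith [norm_nonneg (θ' - θ₀)]
  have hne : S.Nonempty := ⟨_, θPO, hθPO, rfl⟩
  -- sInf S ≤ value at θPO
  have hinfle : sInf S ≤ P.inf' hPne (fun θ' => DPRhat θ' θPO + ε * Lz * ‖θ' - θPO‖) :=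
    csInf_le hbdd ⟨θPO, hθPO, rfl⟩
  have hqn : ‖q - θPO‖ ≤ r := by
    rw [show q - θPO = -(θPO - q) by abel, norm_neg]; exact hqr
  have hE : P.inf' hPne (fun θ' => DPRhat θ' θPO + ε * Lz * ‖θ' - θPO‖)
      ≤ DPR θPO θPO + 3 * γ := by
    have h1 : P.inf' hPne (fun θ' => DPRhat θ' θPO + ε * Lz * ‖θ' - θPO‖)
        ≤ DPRhat q θPO + ε * Lz * ‖q - θPO‖ := Finset.inf'_le _ hqP
    have h2 := abs_le.1 (hest q hqP θPO hθPO)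
    have h3 := abs_le.1 (hLip q θPO θPO)
    have h4 : ε * Lz * ‖q - θPO‖ ≤ γ := hrγ ▸ mul_le_mul_of_nonneg_left hqn hεLz
    linarith [h3.1]
  have hA : DPR θ θ ≤ DPRhat p θ - ε * Lz * ‖θ - p‖ + 3 * γ := by
    have h2 := abs_le.1 (hest p hpP θ hθ)
    have h3 := abs_le.1 (hLip θ p θ)
    have h4 : ε * Lz * ‖θ - p‖ ≤ γ := hrγ ▸ mul_le_mul_of_nonneg_left hpr hεLz
    linarith [h3.1, h3.2]
  have hB : DPRhat p θ - ε * Lz * ‖θ - p‖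
      ≤ P.sup' hPne (fun θ' => DPRhat θ' θ - ε * Lz * ‖θ - θ'‖) :=
    Finset.le_sup' (fun θ' => DPRhat θ' θ - ε * Lz * ‖θ - θ'‖) hpP
  linarith
end

section
/- Suppose the loss ℓ(z;θ) takes values in [0,1] and is L_z-Lipschitz in z, the distribution map is a location family D(θ) = law of z₀ + μ*ᵀθ with z₀ ∼ D₀, the confidence set C_t contains μ*, the deployed point θ_t minimizes PR_LB(θ) := min_{μ∈C_t} E_{z₀∼D₀} ℓ(z₀ + μᵀθ; θ) over Θ, and θ_PO minimizes PR(θ) = E_{z₀∼D₀} ℓ(z₀ + μ*ᵀθ; θ). Then the suboptimality satisfies Δ(θ_t) := PR(θ_t) − PR(θ_PO) ≤ min{1, L_z · sup_{μ,μ'∈C_t} ‖(μ − μ')ᵀθ_t‖}. -/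
open MeasureTheory

/-- Location-family suboptimality bound: if the confidence set `C` contains `μ*`, the
deployed point `θ_t` minimizes the lower confidence bound
`PR_LB(θ) = min_{μ ∈ C} E_{z₀∼D₀} ℓ(z₀ + μᵀθ; θ)`, and `θ_PO` minimizes
`PR(θ) = E_{z₀∼D₀} ℓ(z₀ + μ*ᵀθ; θ)`, then
`PR(θ_t) − PR(θ_PO) ≤ min{1, L_z · sup_{μ,μ'∈C} ‖(μ−μ')ᵀθ_t‖}`. -/
theorem location_family_suboptimality {d m : ℕ}
    (Θ : Set (EuclideanSpace ℝ (Fin d))) (hΘc : IsCompact Θ) (hΘne : Θ.Nonempty)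
    (D₀ : Measure (EuclideanSpace ℝ (Fin m))) [IsProbabilityMeasure D₀]
    (ℓ : EuclideanSpace ℝ (Fin m) → EuclideanSpace ℝ (Fin d) → ℝ)
    (Lz : ℝ) (hLz : 0 ≤ Lz)
    (hbdd : ∀ z θ, ℓ z θ ∈ Set.Icc (0 : ℝ) 1)
    (hLipz : ∀ θ, ∀ z z', |ℓ z θ - ℓ z' θ| ≤ Lz * ‖z - z'‖)
    (C : Set (EuclideanSpace ℝ (Fin d) →L[ℝ] EuclideanSpace ℝ (Fin m)))
    (hCc : IsCompact C) (hCne : C.Nonempty)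
    (μstar : EuclideanSpace ℝ (Fin d) →L[ℝ] EuclideanSpace ℝ (Fin m))
    (hμstar : μstar ∈ C)
    (hint : ∀ (μ : EuclideanSpace ℝ (Fin d) →L[ℝ] EuclideanSpace ℝ (Fin m)) θ,
      Integrable (fun z => ℓ (z + μ θ) θ) D₀)
    (θt : EuclideanSpace ℝ (Fin d)) (hθt : θt ∈ Θ)
    (hθtmin : ∀ θ ∈ Θ,
      sInf {x : ℝ | ∃ μ ∈ C, x = ∫ z, ℓ (z + μ θt) θt ∂D₀} ≤
        sInf {x : ℝ | ∃ μ ∈ C, x = ∫ z, ℓ (z + μ θ) θ ∂D₀})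
    (θPO : EuclideanSpace ℝ (Fin d)) (hθPO : θPO ∈ Θ)
    (hPOmin : ∀ θ ∈ Θ,
      (∫ z, ℓ (z + μstar θPO) θPO ∂D₀) ≤ ∫ z, ℓ (z + μstar θ) θ ∂D₀) :
    (∫ z, ℓ (z + μstar θt) θt ∂D₀) - (∫ z, ℓ (z + μstar θPO) θPO ∂D₀) ≤
      min 1 (Lz * sSup {x : ℝ | ∃ μ ∈ C, ∃ μ' ∈ C, x = ‖μ θt - μ' θt‖}) := by
  set S := sSup {x : ℝ | ∃ μ ∈ C, ∃ μ' ∈ C, x = ‖μ θt - μ' θt‖} with hS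
  -- boundedness of C
  obtain ⟨R, hR⟩ : ∃ R : ℝ, ∀ μ ∈ C, ‖μ‖ ≤ R := by
    obtain ⟨R, hR⟩ := hCc.isBounded.subset_closedBall 0
    exact ⟨R, fun μ hμ => by simpa using hR hμ⟩
  have hbddS : BddAbove {x : ℝ | ∃ μ ∈ C, ∃ μ' ∈ C, x = ‖μ θt - μ' θt‖} := by
    refine ⟨2 * R * ‖θt‖, ?_⟩
    rintro x ⟨μ, hμ, μ', hμ', rfl⟩
    calc ‖μ θt - μ' θt‖ ≤ ‖μ θt‖ + ‖μ' θt‖ := norm_sub_le _ _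
      _ ≤ R * ‖θt‖ + R * ‖θt‖ := by
          have hμb := le_trans (μ.le_opNorm θt)
            (mul_le_mul_of_nonneg_right (hR μ hμ) (norm_nonneg θt))
          have hμ'b := le_trans (μ'.le_opNorm θt)
            (mul_le_mul_of_nonneg_right (hR μ' hμ') (norm_nonneg θt))
          linarith
      _ = 2 * R * ‖θt‖ := by ring
  -- basic facts about the integrals
  have hI01 : ∀ (μ : EuclideanSpace ℝ (Fin d) →L[ℝ] EuclideanSpace ℝ (Fin m)) θ,
      (0 : ℝ) ≤ ∫ z, ℓ (z + μ θ) θ ∂D₀ ∧ (∫ z, ℓ (z + μ θ) θ ∂D₀) ≤ 1 := by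
    intro μ θ
    constructor
    · exact integral_nonneg fun z => (hbdd _ _).1
    · calc (∫ z, ℓ (z + μ θ) θ ∂D₀) ≤ ∫ _, (1 : ℝ) ∂D₀ :=
          integral_mono (hint μ θ) (integrable_const 1) fun z => (hbdd _ _).2
        _ = 1 := by simp
  refine le_min ?_ ?_
  · linarith [(hI01 μstar θt).2, (hI01 μstar θPO).1]
  · -- the Lipschitz bound
    have key : ∀ μ ∈ C, (∫ z, ℓ (z + μstar θt) θt ∂D₀) ≤
        (∫ z, ℓ (z + μ θt) θt ∂D₀) + Lz * S := by
      intro μ hμ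
      have hnorm : ‖μstar θt - μ θt‖ ≤ S :=
        le_csSup hbddS ⟨μstar, hμstar, μ, hμ, rfl⟩
      have hpt : ∀ z, ℓ (z + μstar θt) θt ≤ ℓ (z + μ θt) θt + Lz * S := by
        intro z
        have h1 := hLipz θt (z + μstar θt) (z + μ θt)
        have h2 : z + μstar θt - (z + μ θt) = μstar θt - μ θt := by
          abel
        rw [h2] at h1
        have := abs_le.mp h1
        have h3 : Lz * ‖μstar θt - μ θt‖ ≤ Lz * S := by gcongr
        linarith [this.2]
      calc (∫ z, ℓ (z + μstar θt) θt ∂D₀)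
          ≤ ∫ z, (ℓ (z + μ θt) θt + Lz * S) ∂D₀ :=
            integral_mono (hint μstar θt) ((hint μ θt).add (integrable_const _)) hpt
        _ = (∫ z, ℓ (z + μ θt) θt ∂D₀) + Lz * S := by
            rw [integral_add (hint μ θt) (integrable_const _)]; simp
    -- inf properties
    have hInfLB : ∀ θ, BddBelow {x : ℝ | ∃ μ ∈ C, x = ∫ z, ℓ (z + μ θ) θ ∂D₀} := by
      intro θ
      exact ⟨0, by rintro x ⟨μ, hμ, rfl⟩; exact (hI01 μ θ).1⟩
    have h1 : (∫ z, ℓ (z + μstar θt) θt ∂D₀) - Lz * S ≤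
        sInf {x : ℝ | ∃ μ ∈ C, x = ∫ z, ℓ (z + μ θt) θt ∂D₀} := by
      refine le_csInf ⟨_, μstar, hμstar, rfl⟩ ?_
      rintro x ⟨μ, hμ, rfl⟩
      linarith [key μ hμ]
    have h2 : sInf {x : ℝ | ∃ μ ∈ C, x = ∫ z, ℓ (z + μ θPO) θPO ∂D₀} ≤
        ∫ z, ℓ (z + μstar θPO) θPO ∂D₀ :=
      csInf_le (hInfLB θPO) ⟨μstar, hμstar, rfl⟩
    have h3 := hθtmin θPO hθPO
    -- careful: le_csInf gives inf + const form; rearrange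
    linarith
end

section
/- (Elliptical potential lemma) Let θ₁, …, θ_T ∈ ℝ^d with ‖θ_t‖ ≤ 1, λ > 0, V₀ = λI and V_t = V_{t−1} + θ_tθ_tᵀ. Then Σ_{t=1}^T min{1, θ_tᵀ V_{t−1}^{−1} θ_t} ≤ 2d log((dλ + T)/(dλ)). -/
open Matrix

lemma min_le_two_log (u : ℝ) (hu : 0 ≤ u) : min 1 u ≤ 2 * Real.log (1 + u) := by
  have h1u : (0:ℝ) < 1 + u := by linarith
  rcases le_total u 1 with h | h
  · rw [min_eq_right h]
    have key : Real.exp (u/2) ≤ 1 + u := by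
      have h2 : 1 - u/2 ≤ Real.exp (-(u/2)) := by
        have := Real.add_one_le_exp (-(u/2)); linarith
      have h3 : Real.exp (u/2) * (1 - u/2) ≤ 1 := by
        calc Real.exp (u/2) * (1 - u/2) ≤ Real.exp (u/2) * Real.exp (-(u/2)) :=
              mul_le_mul_of_nonneg_left h2 (Real.exp_pos _).le
          _ = 1 := by rw [← Real.exp_add]; simp
      nlinarith [Real.exp_pos (u/2)]
    have := (Real.le_log_iff_exp_le h1u).2 key
    linarith
  · rw [min_eq_left h]
    have he : Real.exp (1/2 : ℝ) ≤ 1 + u := by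
      have h2 : Real.exp (1/2 : ℝ) < 2 := by
        have hsq : Real.exp (1/2 : ℝ) ^ 2 < 2 ^ 2 := by
          rw [← Real.exp_nat_mul]
          norm_num
          nlinarith [Real.exp_one_lt_d9]
        exact lt_of_pow_lt_pow_left₀ 2 (by norm_num) hsq
      linarith
    have := (Real.le_log_iff_exp_le h1u).2 he
    linarith

lemma trace_eq_sum_eigs {d : ℕ} {A : Matrix (Fin d) (Fin d) ℝ} (hA : A.IsHermitian) :
    A.trace = ∑ i, hA.eigenvalues i := by
  conv_lhs => rw [hA.spectral_theorem]
  rw [Unitary.conjStarAlgAut_apply, trace_mul_cycle]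
  rw [(Matrix.mem_unitaryGroup_iff').mp (hA.eigenvectorUnitary).2, one_mul, trace_diagonal]
  simp

lemma vecMulVec_hermitian {d : ℕ} (w : Fin d → ℝ) : (vecMulVec w w).IsHermitian := by
  ext i j
  simp [vecMulVec_apply, conjTranspose_apply, mul_comm]

lemma dot_vecMulVec {d : ℕ} (w v x : Fin d → ℝ) :
    x ⬝ᵥ (vecMulVec w v) *ᵥ x = (x ⬝ᵥ w) * (v ⬝ᵥ x) := by
  simp [dotProduct, vecMulVec_apply, mulVec, Finset.mul_sum, Finset.sum_mul, mul_assoc]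
  rw [Finset.sum_comm]

lemma vecMulVec_posSemidef {d : ℕ} (w : Fin d → ℝ) : (vecMulVec w w).PosSemidef := by
  refine posSemidef_iff_dotProduct_mulVec.2 ⟨vecMulVec_hermitian w, fun x => ?_⟩
  rw [star_trivial, dot_vecMulVec]
  have h : x ⬝ᵥ w = w ⬝ᵥ x := dotProduct_comm _ _
  rw [h]
  exact mul_self_nonneg _

lemma det_rank_one_update {d : ℕ} {A : Matrix (Fin d) (Fin d) ℝ} (hA : IsUnit A.det)
    (w : Fin d → ℝ) :
    (A + vecMulVec w w).det = A.det * (1 + w ⬝ᵥ A⁻¹ *ᵥ w) := by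
  rw [vecMulVec_eq Unit, det_add_replicateCol_mul_replicateRow hA]
  congr 1
  rw [det_unique]
  simp [Matrix.mul_apply, Matrix.replicateRow_apply, Matrix.replicateCol_apply, dotProduct, mulVec,
    Finset.mul_sum, Finset.sum_mul]
  rw [Finset.sum_comm]
  exact Finset.sum_congr rfl fun i _ => Finset.sum_congr rfl fun j _ => by ring

/-- Elliptical potential lemma: for `θ_t` with `‖θ_t‖ ≤ 1`, `V₀ = λI`, and
`V_t = V_{t−1} + θ_tθ_tᵀ`, one has
`Σ_{t=1}^T min{1, θ_tᵀ V_{t−1}⁻¹ θ_t} ≤ 2d log((dλ + T)/(dλ))`. -/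
theorem elliptical_potential {d : ℕ} (hd : 0 < d) (T : ℕ)
    (lam : ℝ) (hlam : 0 < lam)
    (θ : ℕ → Fin d → ℝ)
    (hθ : ∀ t, ∑ i, θ t i ^ 2 ≤ 1)
    (V : ℕ → Matrix (Fin d) (Fin d) ℝ)
    (hV0 : V 0 = lam • (1 : Matrix (Fin d) (Fin d) ℝ))
    (hVsucc : ∀ t, V (t + 1) = V t + Matrix.of fun i j => θ (t + 1) i * θ (t + 1) j) :
    ∑ t ∈ Finset.range T, min 1 (θ (t + 1) ⬝ᵥ ((V t)⁻¹ *ᵥ θ (t + 1))) ≤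
      2 * d * Real.log ((d * lam + T) / (d * lam)) := by
  have hD : (0:ℝ) < d := by exact_mod_cast hd
  have hVof : ∀ t : ℕ, (Matrix.of fun i j => θ (t+1) i * θ (t+1) j)
      = vecMulVec (θ (t+1)) (θ (t+1)) := fun t => rfl
  -- positive definiteness
  have hpd : ∀ t, (V t).PosDef := by
    intro t
    induction t with
    | zero =>
      rw [hV0]
      refine posDef_iff_dotProduct_mulVec.2 ⟨?_, fun x hx => ?_⟩
      · ext i j
        simp [conjTranspose_apply, Matrix.one_apply]
        split <;> simp_all [eq_comm]
      · rw [star_trivial, smul_mulVec, one_mulVec, dotProduct_smul]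
        have hxx : 0 < x ⬝ᵥ x := by
          have := (dotProduct_star_self_pos_iff (v := x)).2 hx
          simpa using this
        exact mul_pos hlam hxx
    | succ t ih =>
      rw [hVsucc t, hVof t]
      exact ih.add_posSemidef (vecMulVec_posSemidef _)
  set u : ℕ → ℝ := fun t => θ (t+1) ⬝ᵥ (V t)⁻¹ *ᵥ θ (t+1) with hu
  have hunn : ∀ t, 0 ≤ u t := by
    intro t
    have := ((hpd t).inv).posSemidef.dotProduct_mulVec_nonneg (θ (t+1))
    simpa [hu] using this
  -- determinant recursion
  have hdet : ∀ t, (V (t+1)).det = (V t).det * (1 + u t) := by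
    intro t
    rw [hVsucc t, hVof t, det_rank_one_update (hpd t).det_pos.ne'.isUnit]
  have hdetpos : ∀ t, 0 < (V t).det := fun t => (hpd t).det_pos
  -- telescoping sum of logs
  have hlogstep : ∀ t, Real.log (1 + u t)
      = Real.log ((V (t+1)).det) - Real.log ((V t).det) := by
    intro t
    rw [hdet t, Real.log_mul (hdetpos t).ne' (by have := hunn t; positivity)]
    ring
  have htel : ∑ t ∈ Finset.range T, Real.log (1 + u t)
      = Real.log ((V T).det) - Real.log ((V 0).det) := by
    rw [Finset.sum_congr rfl fun t _ => hlogstep t]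
    exact Finset.sum_range_sub (fun t => Real.log ((V t).det)) T
  -- first step: bound the mins
  have step1 : ∑ t ∈ Finset.range T, min 1 (u t)
      ≤ 2 * (Real.log ((V T).det) - Real.log ((V 0).det)) := by
    calc ∑ t ∈ Finset.range T, min 1 (u t)
        ≤ ∑ t ∈ Finset.range T, 2 * Real.log (1 + u t) :=
          Finset.sum_le_sum fun t _ => min_le_two_log (u t) (hunn t)
      _ = 2 * ∑ t ∈ Finset.range T, Real.log (1 + u t) := by rw [Finset.mul_sum]
      _ = 2 * (Real.log ((V T).det) - Real.log ((V 0).det)) := by rw [htel]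
  -- det V 0
  have hdet0 : Real.log ((V 0).det) = d * Real.log lam := by
    rw [hV0]
    simp [Matrix.det_smul, Real.log_pow]
  -- trace bound
  have htr : ∀ t, (V t).trace ≤ d * lam + t := by
    intro t
    induction t with
    | zero =>
      rw [hV0]
      simp [Matrix.trace_smul, Matrix.trace_one]
      rw [mul_comm]
    | succ t ih =>
      rw [hVsucc t, hVof t, trace_add]
      have htr1 : (vecMulVec (θ (t+1)) (θ (t+1))).trace ≤ 1 := by
        have := hθ (t+1)
        simpa [Matrix.trace, Matrix.diag, vecMulVec_apply, sq] using this
      push_cast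
      linarith
  -- eigenvalue bound on log det V T
  have hH := (hpd T).isHermitian
  set μ : Fin d → ℝ := hH.eigenvalues with hμ
  have hμpos : ∀ i, 0 < μ i := fun i => (hpd T).eigenvalues_pos i
  have hdetT : (V T).det = ∏ i, μ i := by
    have := hH.det_eq_prod_eigenvalues
    simpa using this
  have htrT : ∑ i, μ i ≤ d * lam + T := by
    rw [← trace_eq_sum_eigs hH]; exact htr T
  have hamgm : ∏ i, μ i ^ ((d:ℝ)⁻¹) ≤ (d * lam + T) / d := by
    have h := Real.geom_mean_le_arith_mean_weighted Finset.univ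
      (fun _ => (d:ℝ)⁻¹) μ (fun i _ => by positivity)
      (by simp [Finset.card_univ]; field_simp) (fun i _ => (hμpos i).le)
    calc ∏ i, μ i ^ ((d:ℝ)⁻¹) ≤ ∑ i, (d:ℝ)⁻¹ * μ i := h
      _ = (∑ i, μ i) / d := by rw [← Finset.mul_sum]; ring
      _ ≤ (d * lam + T) / d := by gcongr
  have hPpos : 0 < ∏ i, μ i ^ ((d:ℝ)⁻¹) :=
    Finset.prod_pos fun i _ => Real.rpow_pos_of_pos (hμpos i) _
  have hlogP : Real.log (∏ i, μ i ^ ((d:ℝ)⁻¹)) = (d:ℝ)⁻¹ * Real.log ((V T).det) := by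
    rw [Real.log_prod (fun i _ => (Real.rpow_pos_of_pos (hμpos i) _).ne'), hdetT,
      Real.log_prod (fun i _ => (hμpos i).ne'), Finset.mul_sum]
    exact Finset.sum_congr rfl fun i _ => Real.log_rpow (hμpos i) _
  have hlogdetT : Real.log ((V T).det) ≤ d * Real.log ((d * lam + T) / d) := by
    have h1 : Real.log (∏ i, μ i ^ ((d:ℝ)⁻¹)) ≤ Real.log ((d * lam + T) / d) :=
      Real.log_le_log hPpos hamgm
    rw [hlogP] at h1
    have h2 := mul_le_mul_of_nonneg_left h1 hD.le
    rwa [← mul_assoc, mul_inv_cancel₀ hD.ne', one_mul] at h2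
  -- combine
  have hdlT : (0:ℝ) < d * lam + T := by positivity
  have hfinal : Real.log ((d * lam + T) / d) - Real.log lam
      = Real.log ((d * lam + T) / (d * lam)) := by
    rw [Real.log_div hdlT.ne' hD.ne', Real.log_div hdlT.ne' (by positivity),
      Real.log_mul hD.ne' hlam.ne']
    ring
  calc ∑ t ∈ Finset.range T, min 1 (θ (t + 1) ⬝ᵥ ((V t)⁻¹ *ᵥ θ (t + 1)))
      = ∑ t ∈ Finset.range T, min 1 (u t) := rfl
    _ ≤ 2 * (Real.log ((V T).det) - Real.log ((V 0).det)) := step1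
    _ ≤ 2 * (d * Real.log ((d * lam + T) / d) - d * Real.log lam) := by
        rw [hdet0]; linarith [hlogdetT]
    _ = 2 * d * (Real.log ((d * lam + T) / d) - Real.log lam) := by ring
    _ = 2 * d * Real.log ((d * lam + T) / (d * lam)) := by rw [hfinal]
end
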